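/- In Approval voting with n ≥ 2 candidates, approving exactly the candidates {c_1,…,c_{n−1}} (all candidates except the worst one c_n) is loss-averse and is the unique loss-averse action. -/

import Mathlib

/-!
Write `V*` for the ballot approving everyone except the worst candidate `last`.
Every outcome is worth at least `f last`. If `V*` elects `last`, then `last` beats every other
candidate by a point without the voter's help, so every ballot elects `last`; hence wherever
some ballot `V` and `V*` lead to different outcomes, `V*` gets at least the second-worst utility.
Conversely, for `V ≠ V*` there is a candidate `i ≠ last` with `last ∈ V` or `i ∉ V`, and giving
one point each to `i` and `last` makes `V` elect `last` but `V*` elect `i`. So `V` attains the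
worst utility on the states where it differs from `V*`, while `V*` stays strictly above it there.
-/

/-- The set of nature states on which two actions `a`, `a'` give different utilities. -/
def diffStates {A N : Type*} (u : A → N → ℝ) (a a' : A) : Set N :=
  {η | u a η ≠ u a' η}

/-- The infimum (in the extended reals, so that the infimum over the empty set is `+∞`)
of the utility of action `c` over a set `s` of nature states. -/
noncomputable def infOn {A N : Type*} (u : A → N → ℝ) (c : A) (s : Set N) : EReal :=
  ⨅ η ∈ s, (u c η : EReal)

/-- An action `a` is loss-averse if for every other action `a'`, over the set of nature states
where the two actions' utilities differ, the infimum of `a`'s utility is at least the infimum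
of `a'`'s utility. -/
def LossAverse {A N : Type*} (u : A → N → ℝ) (a : A) : Prop :=
  ∀ a' : A, infOn u a' (diffStates u a a') ≤ infOn u a (diffStates u a a')

/-- The winner for a vector of total scores: the candidate with maximal total score,
ties broken toward the largest index (the worst candidate). -/
noncomputable def winner {n : ℕ} (hn : 0 < n) (total : Fin n → ℕ) : Fin n :=
  (Finset.univ.filter fun j => ∀ k, total k ≤ total j).max' (by
    haveI : Nonempty (Fin n) := ⟨⟨0, hn⟩⟩
    obtain ⟨j, -, hj⟩ :=
      Finset.exists_max_image (Finset.univ : Finset (Fin n)) total Finset.univ_nonempty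
    exact ⟨j, Finset.mem_filter.mpr ⟨Finset.mem_univ _, fun k => hj k (Finset.mem_univ _)⟩⟩)

/-- Approval voting from a single voter's perspective, with cardinal utilities `f` over the
`n` candidates: the voter approves a subset `V` of candidates, a nature state is the vector
`s` of points awarded by the other voters, candidate `j`'s total score is `s j` plus one if
`j ∈ V`, the winner is the candidate of maximal total score (ties broken toward the largest
index, i.e. the worst candidate), and the voter receives `f` of the winner. -/
noncomputable def approvalU {n : ℕ} (hn : 0 < n) (f : Fin n → ℝ)
    (V : Finset (Fin n)) (s : Fin n → ℕ) : ℝ :=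
  f (winner hn fun j => s j + if j ∈ V then 1 else 0)

section LossAverse

variable {A N : Type*} {u : A → N → ℝ}

theorem infOn_le {c : A} {s : Set N} {η : N} (hη : η ∈ s) : infOn u c s ≤ u c η :=
  iInf₂_le η hη

theorem le_infOn {c : A} {s : Set N} {b : ℝ} (h : ∀ η ∈ s, b ≤ u c η) :
    (b : EReal) ≤ infOn u c s :=
  le_iInf₂ fun η hη => EReal.coe_le_coe_iff.2 (h η hη)

theorem lossAverse_of_exists_le_lt {a : A} {m : ℝ} (hm : ∀ a' η, m ≤ u a' η)
    (h : ∀ a' ≠ a, ∃ η, u a' η ≤ m ∧ m < u a η) : LossAverse u a := by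
  intro a'
  rcases eq_or_ne a' a with rfl | ha'
  · exact le_rfl
  obtain ⟨η, hle, hlt⟩ := h a' ha'
  calc infOn u a' (diffStates u a a')
      ≤ u a' η := infOn_le (show u a η ≠ u a' η by linarith)
    _ ≤ m := EReal.coe_le_coe_iff.2 hle
    _ ≤ infOn u a (diffStates u a a') := le_infOn fun η _ => hm a η

theorem LossAverse.eq_of_exists_le_lt {a a' : A} {m b : ℝ} (ha' : LossAverse u a')
    (hgap : ∀ η, u a' η ≠ u a η → b ≤ u a η) (hmb : m < b)
    (h : ∀ a' ≠ a, ∃ η, u a' η ≤ m ∧ m < u a η) : a' = a := by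
  by_contra hne
  obtain ⟨η, hle, hlt⟩ := h a' hne
  have hb : (b : EReal) ≤ m :=
    calc (b : EReal) ≤ infOn u a (diffStates u a' a) := le_infOn hgap
      _ ≤ infOn u a' (diffStates u a' a) := ha' a
      _ ≤ u a' η := infOn_le (show u a' η ≠ u a η by linarith)
      _ ≤ m := EReal.coe_le_coe_iff.2 hle
  exact absurd (EReal.coe_le_coe_iff.1 hb) (not_le.2 hmb)

end LossAverse

section Winner

variable {n : ℕ} (hn : 0 < n)

theorem le_total_winner (total : Fin n → ℕ) (k : Fin n) : total k ≤ total (winner hn total) :=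
  (Finset.mem_filter.1
    (Finset.max'_mem (Finset.univ.filter fun j => ∀ k, total k ≤ total j) _)).2 k

theorem winner_eq_of {total : Fin n → ℕ} {j : Fin n} (hmax : ∀ k, total k ≤ total j)
    (hlt : ∀ k, j < k → total k < total j) : winner hn total = j := by
  refine le_antisymm (Finset.max'_le _ _ _ fun k hk => ?_)
    (Finset.le_max' _ _ (Finset.mem_filter.2 ⟨Finset.mem_univ j, hmax⟩))
  by_contra hjk
  exact (hlt k (not_le.1 hjk)).not_ge ((Finset.mem_filter.1 hk).2 j)

theorem winner_eq_of_isTop {total : Fin n → ℕ} {last : Fin n} (htop : IsTop last)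
    (hmax : ∀ k, total k ≤ total last) : winner hn total = last :=
  winner_eq_of hn hmax fun k hk => absurd (htop k) (not_le.2 hk)

end Winner

section Approval

variable {n : ℕ} (hn : 0 < n) {last : Fin n}

def approvalScore (V : Finset (Fin n)) (s : Fin n → ℕ) (j : Fin n) : ℕ :=
  s j + if j ∈ V then 1 else 0

theorem approvalU_eq (f : Fin n → ℝ) (V : Finset (Fin n)) (s : Fin n → ℕ) :
    approvalU hn f V s = f (winner hn (approvalScore V s)) :=
  rfl

theorem winner_eq_of_winner_erase_eq (htop : IsTop last) (V : Finset (Fin n)) (s : Fin n → ℕ)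
    (h : winner hn (approvalScore (Finset.univ.erase last) s) = last) :
    winner hn (approvalScore V s) = last := by
  have hbeat : ∀ k, k ≠ last → s k + 1 ≤ s last := fun k hk => by
    have := le_total_winner hn (approvalScore (Finset.univ.erase last) s) k
    simpa [approvalScore, h, hk] using this
  refine winner_eq_of_isTop hn htop fun k => ?_
  rcases eq_or_ne k last with rfl | hk
  · exact le_rfl
  have := hbeat k hk
  simp only [approvalScore]
  split_ifs <;> omega

def pairState (i last : Fin n) (j : Fin n) : ℕ :=
  if j = i ∨ j = last then 1 else 0

theorem winner_erase_pairState {i : Fin n} (hi : i ≠ last) :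
    winner hn (approvalScore (Finset.univ.erase last) (pairState i last)) = i := by
  refine winner_eq_of hn (fun k => ?_) fun k hk => ?_
  · simp only [approvalScore, pairState, Finset.mem_erase, Finset.mem_univ, and_true]
    split_ifs <;> simp_all
  · simp only [approvalScore, pairState, Finset.mem_erase, Finset.mem_univ, and_true]
    split_ifs <;> simp_all [hk.ne']

theorem winner_pairState_eq_last (htop : IsTop last) {V : Finset (Fin n)} {i : Fin n}
    (h : last ∈ V ∨ i ∉ V) : winner hn (approvalScore V (pairState i last)) = last := by
  refine winner_eq_of_isTop hn htop fun k => ?_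
  simp only [approvalScore, pairState]
  split_ifs <;> grind

theorem exists_lt_and_mem_or_notMem (htop : IsTop last) {pen : Fin n} (hpen : pen < last)
    {V : Finset (Fin n)} (hV : V ≠ Finset.univ.erase last) : ∃ i < last, last ∈ V ∨ i ∉ V := by
  by_contra! h
  refine hV (Finset.ext fun k => ?_)
  rw [Finset.mem_erase, and_iff_left (Finset.mem_univ k)]
  exact ⟨fun hk hkl => (h pen hpen).1 (hkl ▸ hk), fun hk => (h k ((htop k).lt_of_ne hk)).2⟩

variable {f : Fin n → ℝ}

theorem le_approvalU (hf : Antitone f) (htop : IsTop last) (V : Finset (Fin n))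
    (s : Fin n → ℕ) : f last ≤ approvalU hn f V s :=
  hf (htop _)

theorem le_approvalU_erase_of_ne (hf : Antitone f) (htop : IsTop last) {pen : Fin n}
    (hpen : pen ⋖ last) {V : Finset (Fin n)} {s : Fin n → ℕ}
    (h : approvalU hn f V s ≠ approvalU hn f (Finset.univ.erase last) s) :
    f pen ≤ approvalU hn f (Finset.univ.erase last) s := by
  rw [approvalU_eq, approvalU_eq] at *
  refine hf (hpen.le_of_lt ((htop _).lt_of_ne fun hw => h ?_))
  rw [hw, winner_eq_of_winner_erase_eq hn htop V s hw]

theorem exists_approvalU_le_lt (hf : StrictAnti f) (htop : IsTop last) {pen : Fin n}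
    (hpen : pen < last) {V : Finset (Fin n)} (hV : V ≠ Finset.univ.erase last) :
    ∃ s, approvalU hn f V s ≤ f last ∧ f last < approvalU hn f (Finset.univ.erase last) s := by
  obtain ⟨i, hi, hiV⟩ := exists_lt_and_mem_or_notMem htop hpen hV
  refine ⟨pairState i last, ?_, ?_⟩
  · rw [approvalU_eq, winner_pairState_eq_last hn htop hiV]
  · rw [approvalU_eq, winner_erase_pairState hn hi.ne]
    exact hf hi

end Approval

/-- in Approval voting with `n ≥ 2` candidates and cardinal utilities
`1 = f 0 > f 1 > … > f (n-1) = 0`, approving exactly the candidates other than the worst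
one is loss-averse and is the unique loss-averse action. -/
theorem approval_lossAverse_unique (n : ℕ) (hn : 2 ≤ n) (f : Fin n → ℝ)
    (hf : StrictAnti f) :
    LossAverse (approvalU (by omega) f) (Finset.univ.erase ⟨n - 1, by omega⟩) ∧
      ∀ V : Finset (Fin n), LossAverse (approvalU (by omega) f) V →
        V = Finset.univ.erase ⟨n - 1, by omega⟩ := by
  have htop : IsTop (⟨n - 1, by omega⟩ : Fin n) := fun k =>
    Fin.le_def.2 (Nat.le_sub_one_of_lt k.isLt)
  have hpen : (⟨n - 2, by omega⟩ : Fin n) ⋖ ⟨n - 1, by omega⟩ := by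
    rw [Fin.covBy_iff, Nat.covBy_iff_add_one_eq]
    show n - 2 + 1 = n - 1
    omega
  have hwitness := fun V (hV : V ≠ _) => exists_approvalU_le_lt (by omega) hf htop hpen.lt hV
  refine ⟨lossAverse_of_exists_le_lt (le_approvalU _ hf.antitone htop) hwitness, fun V hV => ?_⟩
  exact hV.eq_of_exists_le_lt (fun s hs => le_approvalU_erase_of_ne _ hf.antitone htop hpen hs)
    (hf hpen.lt) hwitness
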